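/- arXiv:0805.3268 — 2 statements merged into one kernel-verified Lean document; each statement's English description precedes it below -/
import Mathlib

section
/- Let m, n be positive natural numbers with m + n > 2. Then there exist nonzero real constants A and B satisfying both conditions (C1): 2ABn + (m-2)A² - B²n = 0, and (C2): A(m-2) + Bn = 2. -/
/-! Writing `k = m - 2`, condition (C1) is homogeneous of degree two in `(A, B)`: with `B = t A` it
says `n t² - 2 n t - k = 0`, i.e. `n (t - 1)² = n + k = m + n - 2 > 0`, which has the positive root
`t = 1 + √(1 + k / n)`. Condition (C2) then only fixes the scale, `A = 2 / (k + n t)`, and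
`k + n t = (n + k) + n √(1 + k / n) > 0`. -/

theorem exists_dilaton_pair_of_root {k n t : ℝ} (ht : t ≠ 0) (hroot : n * t ^ 2 - 2 * n * t - k = 0)
    (hden : k + n * t ≠ 0) :
    ∃ A B : ℝ, A ≠ 0 ∧ B ≠ 0 ∧ 2 * A * B * n + k * A ^ 2 - B ^ 2 * n = 0 ∧ A * k + B * n = 2 := by
  have hA : 2 / (k + n * t) ≠ 0 := div_ne_zero two_ne_zero hden
  refine ⟨2 / (k + n * t), t * (2 / (k + n * t)), hA, mul_ne_zero ht hA, ?_, ?_⟩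
  · linear_combination (-(2 / (k + n * t)) ^ 2) * hroot
  · field_simp

theorem dilaton_ratio_isRoot {k n : ℝ} (hn : 0 < n) (hkn : 0 ≤ n + k) :
    n * (1 + √(1 + k / n)) ^ 2 - 2 * n * (1 + √(1 + k / n)) - k = 0 := by
  have hsq : √(1 + k / n) ^ 2 = 1 + k / n := Real.sq_sqrt (by rw [one_add_div hn.ne']; positivity)
  have hnk : n * (1 + k / n) = n + k := by field_simp
  linear_combination n * hsq + hnk

theorem exists_dilaton_pair {k n : ℝ} (hn : 0 < n) (hkn : 0 < n + k) :
    ∃ A B : ℝ, A ≠ 0 ∧ B ≠ 0 ∧ 2 * A * B * n + k * A ^ 2 - B ^ 2 * n = 0 ∧ A * k + B * n = 2 := by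
  have hden : 0 < k + n * (1 + √(1 + k / n)) := by
    nlinarith [mul_nonneg hn.le (Real.sqrt_nonneg (1 + k / n))]
  exact exists_dilaton_pair_of_root (by positivity) (dilaton_ratio_isRoot hn hkn.le) hden.ne'

theorem exists_dilaton_constants_general (m n : ℕ) (hn : 0 < n) (hmn : 2 < m + n) :
    ∃ A B : ℝ, A ≠ 0 ∧ B ≠ 0 ∧
      2 * A * B * n + ((m : ℝ) - 2) * A ^ 2 - B ^ 2 * n = 0 ∧
      A * ((m : ℝ) - 2) + B * n = 2 := by
  have hmn' : (2 : ℝ) < m + n := by exact_mod_cast hmn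
  exact exists_dilaton_pair (by exact_mod_cast hn) (by linarith)

/-- For positive naturals m, n with m + n > 2, there exist nonzero real
constants A, B satisfying (C1): 2ABn + (m-2)A² - B²n = 0 and (C2): A(m-2) + Bn = 2. -/
theorem exists_dilaton_constants (m n : ℕ) (hm : 0 < m) (hn : 0 < n) (hmn : 2 < m + n) :
    ∃ A B : ℝ, A ≠ 0 ∧ B ≠ 0 ∧
      2 * A * B * n + ((m : ℝ) - 2) * A ^ 2 - B ^ 2 * n = 0 ∧
      A * ((m : ℝ) - 2) + B * n = 2 :=
  exists_dilaton_constants_general m n hn hmn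
end

section
/- Let m, n be positive naturals with m + n > 2, and suppose (A,B) and (A',B') are both pairs of nonzero reals satisfying (C1) and (C2), with m ≠ 2. Then either (A,B) = (A',B'), or A/B and A'/B' are the two distinct roots of (m-2)θ² + 2nθ - n = 0; in particular there are at most two such pairs. -/
/-!
A solution `(A, B)` with `B ≠ 0` is determined by its ratio `θ = A / B`: (C2) reads
`((m - 2) θ + n) B = 2`, which fixes `B` and then `A = θ B`. Dividing (C1) by `B²` shows that
`θ` is a root of `(m - 2) θ² + 2 n θ - n`, and for `m ≠ 2` this quadratic has at most two roots.
-/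

section

variable {K : Type*} [Field K]

theorem add_mul_add_eq_zero_of_quadratic_roots {a b e x y : K}
    (hx : a * x ^ 2 + b * x + e = 0) (hy : a * y ^ 2 + b * y + e = 0) (hxy : x ≠ y) :
    a * (x + y) + b = 0 := by
  have h : (x - y) * (a * (x + y) + b) = 0 := by linear_combination hx - hy
  exact (mul_eq_zero.mp h).resolve_left (sub_ne_zero.mpr hxy)

theorem eq_or_eq_of_quadratic_roots {a b e x y z : K} (ha : a ≠ 0)
    (hx : a * x ^ 2 + b * x + e = 0) (hy : a * y ^ 2 + b * y + e = 0)
    (hz : a * z ^ 2 + b * z + e = 0) (hxy : x ≠ y) : z = x ∨ z = y := by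
  refine or_iff_not_imp_left.mpr fun hzx => ?_
  have hxz := add_mul_add_eq_zero_of_quadratic_roots hx hz (Ne.symm hzx)
  have hxy' := add_mul_add_eq_zero_of_quadratic_roots hx hy hxy
  have h : a * (z - y) = 0 := by linear_combination hxz - hxy'
  exact sub_eq_zero.mp ((mul_eq_zero.mp h).resolve_left ha)

/-- With `c = m - 2` and `d = 2` these are (C1) and (C2). -/
def IsSolution (c n d : K) (p : K × K) : Prop :=
  p.2 ≠ 0 ∧ 2 * p.1 * p.2 * n + c * p.1 ^ 2 - p.2 ^ 2 * n = 0 ∧ p.1 * c + p.2 * n = d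

namespace IsSolution

variable {c n d : K} {p q r : K × K}

theorem quadratic_div_eq_zero (hp : IsSolution c n d p) :
    c * (p.1 / p.2) ^ 2 + 2 * n * (p.1 / p.2) - n = 0 := by
  obtain ⟨hb, hquad, -⟩ := hp
  field_simp
  linear_combination hquad

theorem eq_of_div_eq (hd : d ≠ 0) (hp : IsSolution c n d p) (hq : IsSolution c n d q)
    (h : p.1 / p.2 = q.1 / q.2) : p = q := by
  obtain ⟨a, b⟩ := p
  obtain ⟨a', b'⟩ := q
  obtain ⟨hb, -, hlin⟩ := hp
  obtain ⟨hb', -, hlin'⟩ := hq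
  set θ := a / b
  have ha : a = θ * b := (div_mul_cancel₀ a hb).symm
  have ha' : a' = θ * b' := by rw [h, div_mul_cancel₀ a' hb']
  have hscale : (c * θ + n) * b = d := by rw [← hlin, ha]; ring
  have hscale' : (c * θ + n) * b' = d := by rw [← hlin', ha']; ring
  have hbb' : b = b' :=
    mul_left_cancel₀ (left_ne_zero_of_mul (hscale ▸ hd)) (hscale.trans hscale'.symm)
  rw [ha, ha', hbb']

theorem eq_or_eq_of_ne (hc : c ≠ 0) (hd : d ≠ 0) (hp : IsSolution c n d p)
    (hq : IsSolution c n d q) (hr : IsSolution c n d r) (hpq : p ≠ q) : r = p ∨ r = q := by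
  have root {s : K × K} (hs : IsSolution c n d s) :
      c * (s.1 / s.2) ^ 2 + 2 * n * (s.1 / s.2) + -n = 0 := by
    rw [← sub_eq_add_neg]; exact hs.quadratic_div_eq_zero
  have hdiv : p.1 / p.2 ≠ q.1 / q.2 := fun h => hpq (hp.eq_of_div_eq hd hq h)
  exact (eq_or_eq_of_quadratic_roots hc (root hp) (root hq) (root hr) hdiv).imp
    (hr.eq_of_div_eq hd hp) (hr.eq_of_div_eq hd hq)

end IsSolution

end

theorem exists_pair_forall_mem_eq_or_eq {α : Type*} [Nonempty α] {S : Set α}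
    (h : ∀ x ∈ S, ∀ y ∈ S, x ≠ y → ∀ z ∈ S, z = x ∨ z = y) :
    ∃ p q, ∀ r ∈ S, r = p ∨ r = q := by
  by_cases hS : ∃ x ∈ S, ∃ y ∈ S, x ≠ y
  · obtain ⟨x, hx, y, hy, hxy⟩ := hS
    exact ⟨x, y, h x hx y hy hxy⟩
  · push Not at hS
    rcases S.eq_empty_or_nonempty with rfl | ⟨x, hx⟩
    · obtain ⟨p⟩ := ‹Nonempty α›
      exact ⟨p, p, fun r hr => hr.elim⟩
    · exact ⟨x, x, fun r hr => .inl (hS r hr x hx)⟩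

theorem at_most_two_pairs_general (m n : ℕ)
    (hm2 : m ≠ 2) (A B A' B' : ℝ)
    (hB : B ≠ 0) (hB' : B' ≠ 0)
    (hC1 : 2 * A * B * n + ((m : ℝ) - 2) * A ^ 2 - B ^ 2 * n = 0)
    (hC2 : A * ((m : ℝ) - 2) + B * n = 2)
    (hC1' : 2 * A' * B' * n + ((m : ℝ) - 2) * A' ^ 2 - B' ^ 2 * n = 0)
    (hC2' : A' * ((m : ℝ) - 2) + B' * n = 2) :
    ((A, B) = (A', B') ∨
      (A / B ≠ A' / B' ∧
        ((m : ℝ) - 2) * (A / B) ^ 2 + 2 * n * (A / B) - n = 0 ∧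
        ((m : ℝ) - 2) * (A' / B') ^ 2 + 2 * n * (A' / B') - n = 0)) ∧
    (∃ p q : ℝ × ℝ, ∀ r : ℝ × ℝ,
      (r.1 ≠ 0 ∧ r.2 ≠ 0 ∧
        2 * r.1 * r.2 * n + ((m : ℝ) - 2) * r.1 ^ 2 - r.2 ^ 2 * n = 0 ∧
        r.1 * ((m : ℝ) - 2) + r.2 * n = 2) → r = p ∨ r = q) := by
  have hc : (m : ℝ) - 2 ≠ 0 := sub_ne_zero.mpr (by exact_mod_cast hm2)
  have hsol : IsSolution ((m : ℝ) - 2) n 2 (A, B) := ⟨hB, hC1, hC2⟩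
  have hsol' : IsSolution ((m : ℝ) - 2) n 2 (A', B') := ⟨hB', hC1', hC2'⟩
  refine ⟨?_, ?_⟩
  · by_cases h : A / B = A' / B'
    · exact .inl (hsol.eq_of_div_eq two_ne_zero hsol' h)
    · exact .inr ⟨h, hsol.quadratic_div_eq_zero, hsol'.quadratic_div_eq_zero⟩
  · obtain ⟨p, q, hpq⟩ := exists_pair_forall_mem_eq_or_eq
      (S := {r | IsSolution ((m : ℝ) - 2) n 2 r})
      fun _ hx _ hy hxy _ hz => IsSolution.eq_or_eq_of_ne hc two_ne_zero hx hy hz hxy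
    exact ⟨p, q, fun r ⟨_, hr⟩ => hpq r hr⟩

/-- With m ≠ 2, if (A,B) and (A',B') are two pairs of nonzero reals both
satisfying (C1) and (C2), then either they are equal or A/B and A'/B' are the two distinct
roots of (m-2)θ² + 2nθ - n = 0; in particular there are at most two such pairs. -/
theorem at_most_two_pairs (m n : ℕ) (hm : 0 < m) (hn : 0 < n) (hmn : 2 < m + n)
    (hm2 : m ≠ 2) (A B A' B' : ℝ)
    (hA : A ≠ 0) (hB : B ≠ 0) (hA' : A' ≠ 0) (hB' : B' ≠ 0)
    (hC1 : 2 * A * B * n + ((m : ℝ) - 2) * A ^ 2 - B ^ 2 * n = 0)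
    (hC2 : A * ((m : ℝ) - 2) + B * n = 2)
    (hC1' : 2 * A' * B' * n + ((m : ℝ) - 2) * A' ^ 2 - B' ^ 2 * n = 0)
    (hC2' : A' * ((m : ℝ) - 2) + B' * n = 2) :
    ((A, B) = (A', B') ∨
      (A / B ≠ A' / B' ∧
        ((m : ℝ) - 2) * (A / B) ^ 2 + 2 * n * (A / B) - n = 0 ∧
        ((m : ℝ) - 2) * (A' / B') ^ 2 + 2 * n * (A' / B') - n = 0)) ∧
    (∃ p q : ℝ × ℝ, ∀ r : ℝ × ℝ,
      (r.1 ≠ 0 ∧ r.2 ≠ 0 ∧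
        2 * r.1 * r.2 * n + ((m : ℝ) - 2) * r.1 ^ 2 - r.2 ^ 2 * n = 0 ∧
        r.1 * ((m : ℝ) - 2) + r.2 * n = 2) → r = p ∨ r = q) :=
  at_most_two_pairs_general m n hm2 A B A' B' hB hB' hC1 hC2 hC1' hC2'
end
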